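/- Let m ≥ 1, let S ⊆ 𝔽₂^m be a subspace and Δ ∈ 𝔽₂^m ∖ S; let S_Δ be the subspace spanned by S and Δ, let Ŝ := (S_Δ)⊥, and let Δ̂ be any vector in S⊥ ∖ Ŝ. Then for all x, z ∈ 𝔽₂^m and all α, β ∈ ℂ: H^{⊗m} X^x Z^z (α|S⟩ + β|S+Δ⟩) = Z^x X^z ( ((α+β)/√2)|Ŝ⟩ + ((α−β)/√2)|Ŝ+Δ̂⟩ ). -/

import Mathlib

/-!
The Hadamard transform intertwines the Paulis, `H X^x = Z^x H` and `H Z^z = X^z H`, and sends a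
coset state to a phased state of the dual subspace, `H|T+a⟩ = Z^a|T⊥⟩`; this is orthogonality of
the characters `v ↦ (−1)^{u·v}` on `T` together with `|T|·|T⊥| = 2^m`. Hence the left-hand side
is `Z^x X^z (α|S⊥⟩ + β Z^Δ|S⊥⟩)`. Finally `S⊥` is the disjoint union of the cosets `Ŝ` and
`Ŝ + Δ̂`, on which `(−1)^{Δ·v}` is `+1` and `−1` respectively, so
`|S⊥⟩ = (|Ŝ⟩ + |Ŝ+Δ̂⟩)/√2` and `Z^Δ|S⊥⟩ = (|Ŝ⟩ − |Ŝ+Δ̂⟩)/√2`.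
-/

open scoped BigOperators

noncomputable section

attribute [local instance] Classical.propDecidable

abbrev Fvec (n : ℕ) : Type := Fin n → ZMod 2

abbrev QSpace (n : ℕ) : Type := EuclideanSpace ℂ (Fvec n)

/-- The ±1 lift of a bit: `+1` if `b = 0` and `−1` if `b = 1`. -/
def sgn (b : ZMod 2) : ℂ := if b = 0 then 1 else -1

/-- The dot product over `𝔽₂`. -/
def dotp {n : ℕ} (x y : Fvec n) : ZMod 2 := ∑ i, x i * y i

/-- The orthogonal complement `T⊥ = {w : w·t = 0 for all t ∈ T}` with respect to the
`𝔽₂` dot product. -/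
def dualSub {n : ℕ} (T : Submodule (ZMod 2) (Fvec n)) : Submodule (ZMod 2) (Fvec n) where
  carrier := {w | ∀ t ∈ T, dotp w t = 0}
  add_mem' := by
    intro a b ha hb t ht
    have h : dotp (a + b) t = dotp a t + dotp b t := by
      simp [dotp, add_mul, Finset.sum_add_distrib]
    rw [h, ha t ht, hb t ht, add_zero]
  zero_mem' := by
    intro t ht
    simp [dotp]
  smul_mem' := by
    intro c a ha t ht
    have h : dotp (c • a) t = c * dotp a t := by
      simp [dotp, Finset.mul_sum, mul_assoc]
    rw [h, ha t ht, mul_zero]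

/-- The normalized coset state `|T+a⟩ = |T|^{−1/2} ∑_{t ∈ T} |t+a⟩`
(note that `v = t + a` iff `v + a ∈ T`, as we are in characteristic two). -/
def cosetState {n : ℕ} (T : Submodule (ZMod 2) (Fvec n)) (a : Fvec n) : QSpace n :=
  WithLp.toLp 2 (fun v => if v + a ∈ T then ((Real.sqrt (Nat.card ↥T) : ℂ))⁻¹ else 0)

/-- The subspace `S_Δ` spanned by `S` and `Δ`, i.e. `S ∪ (S + Δ)` when `Δ ∉ S`. -/
def extSpan {n : ℕ} (S : Submodule (ZMod 2) (Fvec n)) (Δ : Fvec n) :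
    Submodule (ZMod 2) (Fvec n) :=
  S ⊔ Submodule.span (ZMod 2) {Δ}

/-- The `m`-qubit Hadamard `H^{⊗m}`, with matrix entries
`⟨u|H^{⊗m}|v⟩ = 2^{−m/2} (−1)^{u·v}`. -/
def Had {n : ℕ} (ψ : QSpace n) : QSpace n :=
  WithLp.toLp 2 (fun u => (Real.sqrt (2 ^ n) : ℂ)⁻¹ * ∑ v, sgn (dotp u v) * ψ v)

/-- The Pauli operator `X^x`, acting by `X^x |v⟩ = |v + x⟩`. -/
def PauliX {n : ℕ} (x : Fvec n) : QSpace n →ₗ[ℂ] QSpace n where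
  toFun ψ := WithLp.toLp 2 (fun v => ψ (v + x))
  map_add' := fun _ _ => rfl
  map_smul' := fun _ _ => rfl

/-- The Pauli operator `Z^z`, acting by `Z^z |v⟩ = (−1)^{z·v} |v⟩`. -/
def PauliZ {n : ℕ} (z : Fvec n) : QSpace n →ₗ[ℂ] QSpace n where
  toFun ψ := WithLp.toLp 2 (fun v => sgn (dotp z v) * ψ v)
  map_add' := fun f g => by ext v; simp [mul_add]
  map_smul' := fun c f => by ext v; simp <;> ring

section
variable {n : ℕ}

lemma zmod_two_eq_zero_or_eq_one (a : ZMod 2) : a = 0 ∨ a = 1 := by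
  revert a; decide

lemma sgn_add (a b : ZMod 2) : sgn (a + b) = sgn a * sgn b := by
  rcases zmod_two_eq_zero_or_eq_one a with rfl | rfl <;>
    rcases zmod_two_eq_zero_or_eq_one b with rfl | rfl <;>
    simp [sgn, show (1 + 1 : ZMod 2) = 0 by decide]

lemma sgn_eq_one_iff {b : ZMod 2} : sgn b = 1 ↔ b = 0 := by
  rcases zmod_two_eq_zero_or_eq_one b with rfl | rfl <;> norm_num [sgn]

def sgnChar : AddChar (ZMod 2) ℂ where
  toFun := sgn
  map_zero_eq_one' := rfl
  map_add_eq_mul' := sgn_add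

lemma sgnChar_apply (b : ZMod 2) : sgnChar b = sgn b := rfl

lemma dotp_eq_dotProduct (x y : Fvec n) : dotp x y = x ⬝ᵥ y := rfl

lemma dotp_comm (u v : Fvec n) : dotp u v = dotp v u := dotProduct_comm u v

lemma dotp_add_left (u v w : Fvec n) : dotp (u + v) w = dotp u w + dotp v w :=
  add_dotProduct u v w

lemma dotp_add_right (u v w : Fvec n) : dotp u (v + w) = dotp u v + dotp u w :=
  dotProduct_add u v w

abbrev dotpForm (n : ℕ) : LinearMap.BilinForm (ZMod 2) (Fvec n) :=
  dotProductBilin (ZMod 2) (ZMod 2)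

lemma mem_dualSub_iff_le_ker {T : Submodule (ZMod 2) (Fvec n)} {w : Fvec n} :
    w ∈ dualSub T ↔ T ≤ LinearMap.ker (dotpForm n w) := Iff.rfl

lemma dualSub_eq_orthogonal (T : Submodule (ZMod 2) (Fvec n)) :
    dualSub T = (dotpForm n).orthogonal T := by
  ext w
  exact forall₂_congr fun t _ => by rw [dotp_eq_dotProduct, dotProduct_comm]; rfl

lemma card_mul_card_dualSub (T : Submodule (ZMod 2) (Fvec n)) :
    Nat.card T * Nat.card (dualSub T) = 2 ^ n := by
  have hrefl : (dotpForm n).IsRefl := fun x y h => by simpa [dotProduct_comm] using h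
  have htop : (dotpForm n).orthogonal ⊤ = ⊥ :=
    (Submodule.eq_bot_iff _).mpr fun v hv =>
      dotProduct_eq_zero v fun w => by simpa [dotProduct_comm] using hv w Submodule.mem_top
  have hrank := LinearMap.BilinForm.finrank_add_finrank_orthogonal hrefl T
  rw [htop, inf_bot_eq, finrank_bot, add_zero, Module.finrank_fin_fun] at hrank
  rw [dualSub_eq_orthogonal, Module.natCard_eq_pow_finrank (K := ZMod 2), Nat.card_zmod,
    Module.natCard_eq_pow_finrank (K := ZMod 2), Nat.card_zmod, ← pow_add, hrank]

lemma sum_sgn_dotp_mem (T : Submodule (ZMod 2) (Fvec n)) (y : Fvec n) :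
    ∑ v, (if v ∈ T then sgn (dotp y v) else 0)
      = if y ∈ dualSub T then (Nat.card T : ℂ) else 0 := by
  let ψ : AddChar T ℂ := sgnChar.compAddMonoidHom
    ((dotpForm n y).toAddMonoidHom.comp T.subtype.toAddMonoidHom)
  have hψ : ψ = 0 ↔ y ∈ dualSub T := by
    rw [AddChar.eq_zero_iff]
    simp [ψ, sgnChar_apply, sgn_eq_one_iff, dualSub, dotp_eq_dotProduct]
  rw [← Finset.sum_filter, Finset.sum_subtype _ (p := (· ∈ T)) (fun v => by simp)]
  convert AddChar.sum_eq_ite ψ using 2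
  · simp [ψ, sgnChar_apply, dotp_eq_dotProduct]
  · rw [hψ]
  · rw [Nat.card_eq_fintype_card]

lemma PauliX_apply (x : Fvec n) (ψ : QSpace n) (v : Fvec n) : PauliX x ψ v = ψ (v + x) := rfl

lemma PauliZ_apply (z : Fvec n) (ψ : QSpace n) (v : Fvec n) :
    PauliZ z ψ v = sgn (dotp z v) * ψ v := rfl

lemma Had_apply (ψ : QSpace n) (u : Fvec n) :
    Had ψ u = (√(2 ^ n) : ℂ)⁻¹ * ∑ v, sgn (dotp u v) * ψ v := rfl

lemma cosetState_apply (T : Submodule (ZMod 2) (Fvec n)) (a v : Fvec n) :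
    cosetState T a v = if v + a ∈ T then (√(Nat.card T) : ℂ)⁻¹ else 0 := rfl

lemma PauliZ_zero (ψ : QSpace n) : PauliZ 0 ψ = ψ := by
  ext v
  rw [PauliZ_apply, dotp_eq_dotProduct, zero_dotProduct, sgn, if_pos rfl, one_mul]

lemma Had_add (ψ φ : QSpace n) : Had (ψ + φ) = Had ψ + Had φ := by
  ext u
  simp only [Had_apply, PiLp.add_apply, mul_add, Finset.sum_add_distrib]

lemma Had_smul (c : ℂ) (ψ : QSpace n) : Had (c • ψ) = c • Had ψ := by
  ext u
  simp only [Had_apply, PiLp.smul_apply, smul_eq_mul, Finset.mul_sum]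
  exact Finset.sum_congr rfl fun _ _ => by ring

lemma Had_PauliX (x : Fvec n) (ψ : QSpace n) : Had (PauliX x ψ) = PauliZ x (Had ψ) := by
  ext u
  rw [PauliZ_apply, Had_apply, Had_apply, mul_left_comm, Finset.mul_sum (a := sgn _)]
  congr 1
  refine (Fintype.sum_equiv (Equiv.addRight x) _ _ fun w => ?_).symm
  rw [PauliX_apply, Equiv.coe_addRight, add_assoc, ZModModule.add_self, add_zero,
    dotp_add_right, sgn_add, dotp_comm x]
  ring

lemma Had_PauliZ (z : Fvec n) (ψ : QSpace n) : Had (PauliZ z ψ) = PauliX z (Had ψ) := by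
  ext u
  simp only [PauliX_apply, PauliZ_apply, Had_apply, dotp_add_left, sgn_add, dotp_comm z, mul_assoc]

lemma inv_sqrt_mul_inv_sqrt_mul_self {p q : ℝ} (hp : 0 < p) :
    (√(p * q))⁻¹ * ((√p)⁻¹ * p) = (√q)⁻¹ := by
  have hsp : 0 < √p := Real.sqrt_pos.mpr hp
  rw [Real.sqrt_mul hp.le]
  field_simp
  rw [Real.sq_sqrt hp.le]

lemma Had_cosetState (T : Submodule (ZMod 2) (Fvec n)) (a : Fvec n) :
    Had (cosetState T a) = PauliZ a (cosetState (dualSub T) 0) := by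
  have hnorm : (√(2 ^ n) : ℂ)⁻¹ * ((√(Nat.card T) : ℂ)⁻¹ * Nat.card T)
      = (√(Nat.card (dualSub T)) : ℂ)⁻¹ := by
    have h := inv_sqrt_mul_inv_sqrt_mul_self (p := Nat.card T) (q := Nat.card (dualSub T))
      (by exact_mod_cast Nat.card_pos)
    rw [← Nat.cast_mul, card_mul_card_dualSub, Nat.cast_pow, Nat.cast_ofNat] at h
    exact_mod_cast congrArg Complex.ofReal h
  ext u
  have hsum : ∑ v, sgn (dotp u v) * cosetState T a v = sgn (dotp u a) *
      ((√(Nat.card T) : ℂ)⁻¹ * if u ∈ dualSub T then (Nat.card T : ℂ) else 0) := by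
    rw [← sum_sgn_dotp_mem, Finset.mul_sum, Finset.mul_sum]
    refine (Fintype.sum_equiv (Equiv.addRight a) _ _ fun w => ?_).symm
    rw [cosetState_apply, Equiv.coe_addRight, add_assoc, ZModModule.add_self, add_zero,
      dotp_add_right, sgn_add]
    split_ifs <;> ring
  rw [Had_apply, hsum, PauliZ_apply, cosetState_apply, add_zero, dotp_comm a]
  split_ifs
  · rw [← hnorm]; ring
  · simp

lemma mem_dualSub_extSpan {S : Submodule (ZMod 2) (Fvec n)} {Δ y : Fvec n} :
    y ∈ dualSub (extSpan S Δ) ↔ y ∈ dualSub S ∧ dotp y Δ = 0 := by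
  rw [mem_dualSub_iff_le_ker, extSpan, sup_le_iff, Submodule.span_singleton_le_iff_mem,
    LinearMap.mem_ker]
  rfl

section
variable {S : Submodule (ZMod 2) (Fvec n)} {Δ Δhat : Fvec n}

lemma add_mem_dualSub_extSpan (h₁ : Δhat ∈ dualSub S) (h₂ : Δhat ∉ dualSub (extSpan S Δ))
    {y : Fvec n} : y + Δhat ∈ dualSub (extSpan S Δ) ↔ y ∈ dualSub S ∧ dotp y Δ = 1 := by
  have hΔ : dotp Δhat Δ = 1 := by
    rw [mem_dualSub_extSpan, not_and] at h₂
    exact (zmod_two_eq_zero_or_eq_one _).resolve_left (h₂ h₁)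
  rw [mem_dualSub_extSpan, Submodule.add_mem_iff_left _ h₁, dotp_add_left, hΔ,
    add_eq_zero_iff_eq_neg, ZMod.neg_eq_self_mod_two]

lemma card_dualSub_eq_two_mul (h₁ : Δhat ∈ dualSub S) (h₂ : Δhat ∉ dualSub (extSpan S Δ)) :
    Nat.card (dualSub S) = 2 * Nat.card (dualSub (extSpan S Δ)) := by
  have hsplit : ∀ v : Fvec n, (if v ∈ dualSub S then 1 else 0) =
      (if v ∈ dualSub (extSpan S Δ) then 1 else 0)
        + (if v + Δhat ∈ dualSub (extSpan S Δ) then 1 else 0) := by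
    intro v
    rw [mem_dualSub_extSpan, add_mem_dualSub_extSpan h₁ h₂]
    by_cases hv : v ∈ dualSub S
    · rcases zmod_two_eq_zero_or_eq_one (dotp v Δ) with h | h <;> simp [hv, h]
    · simp [hv]
  simp only [Nat.card_eq_fintype_card, Fintype.card_subtype, Finset.card_filter]
  rw [Finset.sum_congr rfl fun v _ => hsplit v, Finset.sum_add_distrib, two_mul]
  congr 1
  exact Fintype.sum_equiv (Equiv.addRight Δhat) _ _ fun _ => rfl

lemma inv_sqrt_card_dualSub_eq (h₁ : Δhat ∈ dualSub S) (h₂ : Δhat ∉ dualSub (extSpan S Δ)) :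
    (√(Nat.card (dualSub S)) : ℂ)⁻¹
      = (√2 : ℂ)⁻¹ * (√(Nat.card (dualSub (extSpan S Δ))) : ℂ)⁻¹ := by
  rw [card_dualSub_eq_two_mul h₁ h₂, Nat.cast_mul, Nat.cast_ofNat, Real.sqrt_mul zero_le_two,
    Complex.ofReal_mul, mul_inv]

lemma cosetState_dualSub_eq_add (h₁ : Δhat ∈ dualSub S) (h₂ : Δhat ∉ dualSub (extSpan S Δ)) :
    cosetState (dualSub S) 0 = (√2 : ℂ)⁻¹ •
      (cosetState (dualSub (extSpan S Δ)) 0 + cosetState (dualSub (extSpan S Δ)) Δhat) := by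
  ext v
  simp only [PiLp.smul_apply, PiLp.add_apply, cosetState_apply, add_zero, mem_dualSub_extSpan,
    add_mem_dualSub_extSpan h₁ h₂, inv_sqrt_card_dualSub_eq h₁ h₂, smul_eq_mul]
  by_cases hv : v ∈ dualSub S
  · rcases zmod_two_eq_zero_or_eq_one (dotp v Δ) with h | h <;> simp [hv, h]
  · simp [hv]

lemma PauliZ_cosetState_dualSub_eq_sub (h₁ : Δhat ∈ dualSub S)
    (h₂ : Δhat ∉ dualSub (extSpan S Δ)) :
    PauliZ Δ (cosetState (dualSub S) 0) = (√2 : ℂ)⁻¹ •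
      (cosetState (dualSub (extSpan S Δ)) 0 - cosetState (dualSub (extSpan S Δ)) Δhat) := by
  ext v
  simp only [PauliZ_apply, PiLp.smul_apply, PiLp.sub_apply, cosetState_apply, add_zero,
    mem_dualSub_extSpan, add_mem_dualSub_extSpan h₁ h₂, inv_sqrt_card_dualSub_eq h₁ h₂,
    smul_eq_mul, dotp_comm Δ]
  by_cases hv : v ∈ dualSub S
  · rcases zmod_two_eq_zero_or_eq_one (dotp v Δ) with h | h <;> simp [hv, h, sgn]
  · simp [hv]

end
end

theorem hadamard_of_authenticated_qubit_general
    {m : ℕ}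
    (S : Submodule (ZMod 2) (Fvec m)) (Δ : Fvec m)
    (Δhat : Fvec m) (hΔhat₁ : Δhat ∈ dualSub S) (hΔhat₂ : Δhat ∉ dualSub (extSpan S Δ))
    (x z : Fvec m) (α β : ℂ) :
    Had (PauliX x (PauliZ z (α • cosetState S 0 + β • cosetState S Δ)))
      = PauliZ x (PauliX z
          (((α + β) / (Real.sqrt 2 : ℂ)) • cosetState (dualSub (extSpan S Δ)) 0
            + ((α - β) / (Real.sqrt 2 : ℂ)) • cosetState (dualSub (extSpan S Δ)) Δhat)) := by
  rw [Had_PauliX, Had_PauliZ, Had_add, Had_smul, Had_smul, Had_cosetState, Had_cosetState,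
    PauliZ_zero, PauliZ_cosetState_dualSub_eq_sub hΔhat₁ hΔhat₂,
    cosetState_dualSub_eq_add hΔhat₁ hΔhat₂]
  congr 2
  module

/-- Let `S ⊆ 𝔽₂^m` be a subspace, `Δ ∉ S`, `S_Δ := span(S, Δ)`, `Ŝ := (S_Δ)⊥`, and
`Δ̂ ∈ S⊥ ∖ Ŝ`.  Then for all `x, z ∈ 𝔽₂^m` and `α, β ∈ ℂ`:
`H^{⊗m} X^x Z^z (α|S⟩ + β|S+Δ⟩) = Z^x X^z (((α+β)/√2)|Ŝ⟩ + ((α−β)/√2)|Ŝ+Δ̂⟩)`. -/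
theorem hadamard_of_authenticated_qubit
    {m : ℕ} (hm : 1 ≤ m)
    (S : Submodule (ZMod 2) (Fvec m)) (Δ : Fvec m) (hΔ : Δ ∉ S)
    (Δhat : Fvec m) (hΔhat₁ : Δhat ∈ dualSub S) (hΔhat₂ : Δhat ∉ dualSub (extSpan S Δ))
    (x z : Fvec m) (α β : ℂ) :
    Had (PauliX x (PauliZ z (α • cosetState S 0 + β • cosetState S Δ)))
      = PauliZ x (PauliX z
          (((α + β) / (Real.sqrt 2 : ℂ)) • cosetState (dualSub (extSpan S Δ)) 0
            + ((α - β) / (Real.sqrt 2 : ℂ)) • cosetState (dualSub (extSpan S Δ)) Δhat)) :=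
  hadamard_of_authenticated_qubit_general S Δ Δhat hΔhat₁ hΔhat₂ x z α β
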